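/- arXiv:2108.07042 — 3 statements merged into one kernel-verified Lean document; each statement's English description precedes it below -/
import Mathlib

section
/- Let r ≥ 1 and let A be a set of k = n + p distinct integers consisting of exactly n ≥ 1 negative integers and exactly p ≥ 1 positive integers (0 ∉ A), and let 𝒜 be the multiset consisting of each element of A with multiplicity exactly r. Let α be an integer with 0 ≤ α ≤ rk − 1 and let m ∈ [1, k] be the integer with (m−1)r ≤ α < mr. If m ≤ n and m > p, then |Σ_α(𝒜)| ≥ r(n(n+1)/2 + p(p+1)/2 − (m−p)(m−p+1)/2) + (m−p)(mr − α) + 1. -/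
/-!
Write `X` and `Y` for the negative and the positive elements of `A`, and `σ(M)` for the sum
of a multiset `M`. The multisets `r•X + C` with `C ≤ r•Y` have at least `rn ≥ α` terms and
sums in `[σ(r•X), σ(r•A)]`; the multisets `r•A - E` with `E ≤ r•X` and `|E| ≤ r(n - d) + β`,
where `d = m - p` and `β = mr - α`, have at least `α` terms and sums `σ(r•A) - σ(E) ≥ σ(r•A)`.
So it suffices to count the subsums, with a bounded number of terms, of `r•B` for a set `B` of
positive integers. If `z = max B`, the sums `g + cz` with `c < r` and `g ∈ {0} ∪ B \ {z}` are
pairwise distinct and lie below `rz`, while `rz` plus the subsums of `r•(B \ {z})` lie above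
it: removing `z` costs `r|B|` sums. When at most `β ≤ r` terms are allowed, the sums `w + cv`
with `c < β`, `w ∈ B`, `v = max B`, together with `0`, give `β|B| + 1` sums.
-/

/-- `sigmaSeqAtLeast A r α` is the set of all subsequence sums of the multiset
consisting of each element of `A` with multiplicity `r`, coming from
submultisets with at least `α` terms. -/
def sigmaSeqAtLeast (A : Finset ℤ) (r α : ℕ) : Finset ℤ :=
  (((r • A.val).powerset.filter (fun B => α ≤ Multiset.card B)).map
    Multiset.sum).toFinset

open Finset

def sigmaSeqAtMost (B : Finset ℤ) (r c : ℕ) : Finset ℤ :=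
  (((r • B.val).powerset.filter (fun C => Multiset.card C ≤ c)).map Multiset.sum).toFinset

theorem mem_sigmaSeqAtMost {B : Finset ℤ} {r c : ℕ} {x : ℤ} :
    x ∈ sigmaSeqAtMost B r c ↔ ∃ C ≤ r • B.val, Multiset.card C ≤ c ∧ C.sum = x := by
  simp [sigmaSeqAtMost, and_assoc]

theorem zero_mem_sigmaSeqAtMost (B : Finset ℤ) (r c : ℕ) : 0 ∈ sigmaSeqAtMost B r c :=
  mem_sigmaSeqAtMost.2 ⟨0, Multiset.zero_le _, by simp, Multiset.sum_zero⟩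

theorem sum_mem_sigmaSeqAtLeast {A : Finset ℤ} {r α : ℕ} {C : Multiset ℤ}
    (hC : C ≤ r • A.val) (hα : α ≤ Multiset.card C) : C.sum ∈ sigmaSeqAtLeast A r α := by
  simpa [sigmaSeqAtLeast] using ⟨C, ⟨hC, hα⟩, rfl⟩

namespace Multiset

variable {α : Type*} {s : Multiset α} {w z : α} {c r : ℕ}

theorem nsmul_singleton_le_nsmul (hz : z ∈ s) (hcr : c ≤ r) : c • {z} ≤ r • s :=
  (nsmul_le_nsmul_right (singleton_le.2 hz) c).trans (nsmul_le_nsmul_left (zero_le s) hcr)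

theorem singleton_add_nsmul_singleton_le_nsmul (hw : w ∈ s) (hz : z ∈ s) (hcr : c < r) :
    {w} + c • {z} ≤ r • s :=
  calc {w} + c • {z} ≤ s + c • s :=
        add_le_add (singleton_le.2 hw) (nsmul_singleton_le_nsmul hz le_rfl)
    _ = (c + 1) • s := by rw [succ_nsmul, add_comm]
    _ ≤ r • s := nsmul_le_nsmul_left (zero_le s) hcr

theorem sum_le_sum_of_le {s t : Multiset ℤ} (hst : s ≤ t) (ht : ∀ x ∈ t, 0 ≤ x) :
    s.sum ≤ t.sum := by
  obtain ⟨u, rfl⟩ := le_iff_exists_add.1 hst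
  rw [sum_add, le_add_iff_nonneg_right]
  exact sum_nonneg fun x hx => ht x (mem_add.2 (Or.inr hx))

end Multiset

def unionShifts (s : Finset ℤ) (z : ℤ) (k : ℕ) : Finset ℤ :=
  (range k ×ˢ s).image fun q => q.2 + q.1 * z

section unionShifts

variable {s : Finset ℤ} {a z : ℤ} {k : ℕ}

theorem mem_unionShifts {x : ℤ} :
    x ∈ unionShifts s z k ↔ ∃ c < k, ∃ g ∈ s, g + c * z = x := by
  simp [unionShifts, and_assoc]

theorem unionShifts_subset_Ico (hs : ∀ g ∈ s, a ≤ g ∧ g < a + z) (k : ℕ) :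
    unionShifts s z k ⊆ Ico a (a + k * z) := by
  intro x hx
  obtain ⟨c, hc, g, hg, rfl⟩ := mem_unionShifts.1 hx
  obtain ⟨hag, hgz⟩ := hs g hg
  have hck : (c : ℤ) + 1 ≤ k := by exact_mod_cast hc
  rw [mem_Ico]
  constructor <;> nlinarith

theorem card_unionShifts (hs : ∀ g ∈ s, a ≤ g ∧ g < a + z) (k : ℕ) :
    #(unionShifts s z k) = k * #s := by
  rw [unionShifts, card_image_of_injOn, card_product, card_range]
  rintro ⟨c, g⟩ hcg ⟨c', g'⟩ hcg' (h : g + c * z = g' + c' * z)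
  simp only [coe_product, coe_range, Set.mem_prod, Set.mem_Iio, mem_coe] at hcg hcg'
  have hz : 0 < z := by linarith [hs g hcg.2]
  -- `c` is recovered from `g + c * z` by division by `z`, since `0 ≤ g - a < z`
  have quot : ∀ (c : ℕ) (g : ℤ), g ∈ s → (g + c * z - a) / z = c := fun c g hg => by
    obtain ⟨hag, hgz⟩ := hs g hg
    rw [show g + c * z - a = (g - a) + c * z by ring, Int.add_mul_ediv_right _ _ hz.ne',
      Int.ediv_eq_zero_of_lt (by linarith) (by linarith), zero_add]
  have hc : (c : ℤ) = c' := by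
    rw [← quot c g hcg.2, ← quot c' g' hcg'.2, h]
  obtain rfl : c = c' := Nat.cast_inj.1 hc
  simp only [Prod.mk.injEq, true_and]
  linarith

end unionShifts

section Counting

variable {B : Finset ℤ} {r β : ℕ}

theorem card_sigmaSeqAtMost_ge_of_le (hB : ∀ x ∈ B, 0 < x) (hβr : β ≤ r) :
    β * #B + 1 ≤ #(sigmaSeqAtMost B r β) := by
  rcases B.eq_empty_or_nonempty with rfl | hne
  · simpa using card_pos.2 ⟨0, zero_mem_sigmaSeqAtMost ∅ r β⟩
  set v := B.max' hne
  have hwin : ∀ w ∈ B, 1 ≤ w ∧ w < 1 + v := fun w hw =>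
    ⟨hB w hw, by linarith [B.le_max' w hw]⟩
  have hsub : insert 0 (unionShifts B v β) ⊆ sigmaSeqAtMost B r β := by
    refine insert_subset (zero_mem_sigmaSeqAtMost B r β) fun x hx => ?_
    obtain ⟨c, hc, w, hw, rfl⟩ := mem_unionShifts.1 hx
    refine mem_sigmaSeqAtMost.2 ⟨{w} + c • {v}, ?_, ?_, by simp [Multiset.sum_nsmul]⟩
    · exact Multiset.singleton_add_nsmul_singleton_le_nsmul hw (B.max'_mem hne) (by omega)
    · simp only [Multiset.card_add, Multiset.card_singleton, Multiset.card_nsmul]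
      omega
  have h0 : 0 ∉ unionShifts B v β := fun h => by
    have := mem_Ico.1 (unionShifts_subset_Ico hwin β h)
    omega
  calc β * #B + 1 = #(insert 0 (unionShifts B v β)) := by
        rw [card_insert_of_notMem h0, card_unionShifts hwin]
    _ ≤ _ := card_le_card hsub

theorem add_card_sigmaSeqAtMost_erase_le (hB : ∀ x ∈ B, 0 < x) {z : ℤ} (hz : z ∈ B)
    (hmax : ∀ x ∈ B, x ≤ z) (c : ℕ) :
    r * #B + #(sigmaSeqAtMost (B.erase z) r c) ≤ #(sigmaSeqAtMost B r (r + c)) := by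
  set B' := B.erase z
  have hz0 : 0 < z := hB z hz
  have hB' : ∀ x ∈ B', 0 < x := fun x hx => hB x (mem_of_mem_erase hx)
  have hwin : ∀ g ∈ insert 0 B', 0 ≤ g ∧ g < 0 + z := by
    intro g hg
    rcases mem_insert.1 hg with rfl | hg
    · exact ⟨le_rfl, by simpa⟩
    · have := hmax g (mem_of_mem_erase hg)
      have := ne_of_mem_erase hg
      exact ⟨(hB' g hg).le, by omega⟩
  have hcard : #(insert 0 B') = #B := by
    rw [card_insert_of_notMem fun h => (hB' 0 h).false, card_erase_add_one hz]
  have hval : r • B.val = r • {z} + r • B'.val := by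
    rw [← nsmul_add, Multiset.singleton_add, erase_val, Multiset.cons_erase hz]
  set low := unionShifts (insert 0 B') z r
  set high := (sigmaSeqAtMost B' r c).image (· + r * z)
  have hlow : low ⊆ sigmaSeqAtMost B r (r + c) := fun x hx => by
    obtain ⟨c', hc', g, hg, rfl⟩ := mem_unionShifts.1 hx
    rcases mem_insert.1 hg with rfl | hg
    · refine mem_sigmaSeqAtMost.2 ⟨c' • {z}, Multiset.nsmul_singleton_le_nsmul hz hc'.le, ?_,
        by simp [Multiset.sum_nsmul]⟩
      simp only [Multiset.card_nsmul, Multiset.card_singleton]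
      omega
    · refine mem_sigmaSeqAtMost.2 ⟨{g} + c' • {z},
        Multiset.singleton_add_nsmul_singleton_le_nsmul (mem_of_mem_erase hg) hz hc', ?_,
        by simp [Multiset.sum_nsmul]⟩
      simp only [Multiset.card_add, Multiset.card_nsmul, Multiset.card_singleton]
      omega
  have hhigh : high ⊆ sigmaSeqAtMost B r (r + c) := fun x hx => by
    obtain ⟨_, hy, rfl⟩ := mem_image.1 hx
    obtain ⟨C, hC, hCc, rfl⟩ := mem_sigmaSeqAtMost.1 hy
    refine mem_sigmaSeqAtMost.2 ⟨r • {z} + C, hval ▸ add_le_add_right hC _, ?_,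
      by simp [Multiset.sum_nsmul, add_comm]⟩
    simp only [Multiset.card_add, Multiset.card_nsmul, Multiset.card_singleton]
    omega
  have hdisj : Disjoint low high := by
    refine disjoint_left.2 fun x hxl hxh => ?_
    have hlt := (mem_Ico.1 (unionShifts_subset_Ico hwin r hxl)).2
    obtain ⟨_, hy, rfl⟩ := mem_image.1 hxh
    obtain ⟨C, hC, -, rfl⟩ := mem_sigmaSeqAtMost.1 hy
    have : 0 ≤ C.sum := Multiset.sum_nonneg fun x hx =>
      (hB' x (Multiset.mem_nsmul.1 (Multiset.mem_of_le hC hx)).2).le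
    omega
  calc r * #B + #(sigmaSeqAtMost B' r c) = #low + #high := by
        rw [card_unionShifts hwin, hcard, card_image_of_injective _ (add_left_injective _)]
    _ = #(low ∪ high) := (card_union_of_disjoint hdisj).symm
    _ ≤ _ := card_le_card (union_subset hlow hhigh)

theorem card_sigmaSeqAtMost_ge (hβr : β ≤ r) (d : ℕ) :
    ∀ (f : ℕ) {B : Finset ℤ}, (∀ x ∈ B, 0 < x) → #B = f + d →
      r * ((f + d) * (f + d + 1) / 2) + β * d + 1 ≤
        #(sigmaSeqAtMost B r (r * f + β)) + r * (d * (d + 1) / 2)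
  | 0, B, hB, hcard => by
      have := card_sigmaSeqAtMost_ge_of_le hB hβr
      rw [hcard, zero_add] at this
      rw [zero_add, mul_zero, zero_add]
      omega
  | f + 1, B, hB, hcard => by
      have hne : B.Nonempty := card_pos.1 (by omega)
      have ih := card_sigmaSeqAtMost_ge hβr d f (B := B.erase (B.max' hne))
        (fun x hx => hB x (mem_of_mem_erase hx)) (by rw [card_erase_of_mem (B.max'_mem hne)]; omega)
      have step := add_card_sigmaSeqAtMost_erase_le hB (B.max'_mem hne) (B.le_max' · ·)
        (r := r) (r * f + β)
      have htri : (f + 1 + d) * (f + 1 + d + 1) / 2 = (f + d) * (f + d + 1) / 2 + (f + d + 1) := by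
        rw [show (f + 1 + d) * (f + 1 + d + 1) = (f + d) * (f + d + 1) + 2 * (f + d + 1) by ring,
          Nat.add_mul_div_left _ _ two_pos]
      rw [show r * (f + 1) + β = r + (r * f + β) by ring, htri, mul_add]
      rw [hcard, show f + 1 + d = f + d + 1 by ring] at step
      omega

end Counting

section Splitting

variable {A : Finset ℤ} {r α : ℕ}

theorem sum_add_sum_nsmul_mem_sigmaSeqAtLeast {X Y : Finset ℤ} (hXY : X.val + Y.val = A.val)
    {C : Multiset ℤ} (hC : C ≤ r • Y.val) (hα : α ≤ r * #X) :
    C.sum + (r • X.val).sum ∈ sigmaSeqAtLeast A r α := by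
  rw [add_comm, ← Multiset.sum_add]
  refine sum_mem_sigmaSeqAtLeast ?_ ?_
  · rw [← hXY, nsmul_add]
    exact add_le_add_right hC _
  · rw [Multiset.card_add, Multiset.card_nsmul, card_val]
    omega

theorem sum_nsmul_sub_sum_mem_sigmaSeqAtLeast {E : Multiset ℤ} (hE : E ≤ r • A.val)
    (hα : Multiset.card E + α ≤ r * #A) :
    (r • A.val).sum - E.sum ∈ sigmaSeqAtLeast A r α := by
  have hsum : (r • A.val).sum - E.sum = (r • A.val - E).sum := by
    rw [sub_eq_iff_eq_add, ← Multiset.sum_add, tsub_add_cancel_of_le hE]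
  rw [hsum]
  refine sum_mem_sigmaSeqAtLeast tsub_le_self ?_
  rw [Multiset.card_sub hE, Multiset.card_nsmul, card_val]
  omega

theorem sum_add_sum_nsmul_mem_sigmaSeqAtLeast_of_le_neg {X : Finset ℤ} (hXA : X.val ≤ A.val)
    {C : Multiset ℤ} (hC : C ≤ r • (X.map (Equiv.neg ℤ).toEmbedding).val)
    (hα : Multiset.card C + α ≤ r * #A) :
    C.sum + (r • A.val).sum ∈ sigmaSeqAtLeast A r α := by
  have hE : C.map Neg.neg ≤ r • A.val := by
    refine le_trans ?_ (nsmul_le_nsmul_right hXA r)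
    rw [← Multiset.map_le_map_iff neg_injective, Multiset.map_nsmul, Multiset.map_map]
    simpa using hC
  have := sum_nsmul_sub_sum_mem_sigmaSeqAtLeast hE (α := α) (by rwa [Multiset.card_map])
  rwa [Multiset.sum_map_neg, Multiset.map_id', sub_neg_eq_add, add_comm] at this

theorem filter_neg_val_add_filter_pos_val (h0 : 0 ∉ A) :
    (A.filter (· < 0)).val + (A.filter (0 < ·)).val = A.val := by
  rw [← Multiset.filter_add_not (· < 0) A.val]
  refine congrArg _ (Multiset.filter_congr fun x hx => ?_)
  have := ne_of_mem_of_not_mem hx h0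
  omega

theorem pos_of_mem_map_neg_filter_neg {x : ℤ}
    (hx : x ∈ (A.filter (· < 0)).map (Equiv.neg ℤ).toEmbedding) : 0 < x := by
  simpa using (mem_filter.1 (mem_map_equiv.1 hx)).2

theorem card_add_card_sigmaSeqAtMost_le (h0 : 0 ∉ A) {c c' : ℕ}
    (hα : α ≤ r * #(A.filter (· < 0))) (hc' : c' + α ≤ r * #A) :
    #(sigmaSeqAtMost (A.filter (0 < ·)) r c) +
        #(sigmaSeqAtMost ((A.filter (· < 0)).map (Equiv.neg ℤ).toEmbedding) r c') ≤
      #(sigmaSeqAtLeast A r α) + 1 := by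
  set X := A.filter (· < 0)
  set Y := A.filter (0 < ·)
  have hXY : X.val + Y.val = A.val := filter_neg_val_add_filter_pos_val h0
  set P₁ := (sigmaSeqAtMost Y r c).image (· + (r • X.val).sum)
  set P₂ := (sigmaSeqAtMost (X.map (Equiv.neg ℤ).toEmbedding) r c').image
    (· + (r • A.val).sum)
  have hP₁ : P₁ ⊆ sigmaSeqAtLeast A r α := fun x hx => by
    obtain ⟨_, hy, rfl⟩ := mem_image.1 hx
    obtain ⟨C, hC, -, rfl⟩ := mem_sigmaSeqAtMost.1 hy
    exact sum_add_sum_nsmul_mem_sigmaSeqAtLeast hXY hC hα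
  have hP₂ : P₂ ⊆ sigmaSeqAtLeast A r α := fun x hx => by
    obtain ⟨_, hy, rfl⟩ := mem_image.1 hx
    obtain ⟨C, hC, hCc, rfl⟩ := mem_sigmaSeqAtMost.1 hy
    exact sum_add_sum_nsmul_mem_sigmaSeqAtLeast_of_le_neg (hXY ▸ Multiset.le_add_right _ _) hC
      (by omega)
  have hinter : P₁ ∩ P₂ ⊆ {(r • A.val).sum} := fun x hx => by
    obtain ⟨hx₁, hx₂⟩ := mem_inter.1 hx
    obtain ⟨_, hy₁, rfl⟩ := mem_image.1 hx₁
    obtain ⟨C₁, hC₁, -, rfl⟩ := mem_sigmaSeqAtMost.1 hy₁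
    obtain ⟨_, hy₂, hC₁₂⟩ := mem_image.1 hx₂
    obtain ⟨C₂, hC₂, -, rfl⟩ := mem_sigmaSeqAtMost.1 hy₂
    have h₁ : C₁.sum ≤ (r • Y.val).sum := Multiset.sum_le_sum_of_le hC₁ fun y hy =>
      (mem_filter.1 (Multiset.mem_nsmul.1 hy).2).2.le
    have h₂ : 0 ≤ C₂.sum := Multiset.sum_nonneg fun y hy =>
      (pos_of_mem_map_neg_filter_neg (Multiset.mem_nsmul.1 (Multiset.mem_of_le hC₂ hy)).2).le
    have hsumA : (r • A.val).sum = (r • X.val).sum + (r • Y.val).sum := by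
      rw [← hXY, nsmul_add, Multiset.sum_add]
    rw [mem_singleton]
    linarith
  calc _ = #P₁ + #P₂ := by
        rw [card_image_of_injective _ (add_left_injective _),
          card_image_of_injective _ (add_left_injective _)]
    _ = #(P₁ ∪ P₂) + #(P₁ ∩ P₂) := (card_union_add_card_inter _ _).symm
    _ ≤ #(sigmaSeqAtLeast A r α) + #{(r • A.val).sum} :=
        add_le_add (card_le_card (union_subset hP₁ hP₂)) (card_le_card hinter)
    _ = _ := by rw [card_singleton]

end Splitting

theorem stmt_16_general (n p r α m : ℕ)
    (A : Finset ℤ) (hcard : A.card = n + p)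
    (hneg : (A.filter (fun x => x < 0)).card = n)
    (hpos : (A.filter (fun x => 0 < x)).card = p)
    (h0 : (0 : ℤ) ∉ A)
    (hml : (m - 1) * r ≤ α) (hmu : α < m * r)
    (hmn : m ≤ n) (hmp : p < m) :
    ((sigmaSeqAtLeast A r α).card : ℤ) ≥
      (r : ℤ) * ((n : ℤ) * ((n : ℤ) + 1) / 2 + (p : ℤ) * ((p : ℤ) + 1) / 2
          - ((m : ℤ) - (p : ℤ)) * ((m : ℤ) - (p : ℤ) + 1) / 2)
        + ((m : ℤ) - (p : ℤ)) * ((m : ℤ) * (r : ℤ) - (α : ℤ)) + 1 := by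
  have hβr : m * r - α ≤ r := by
    have := Nat.sub_one_mul m r
    omega
  have hdn : m - p ≤ n := by omega
  have hαn : α ≤ r * n := (hmu.trans_le (mul_comm r n ▸ Nat.mul_le_mul_right r hmn)).le
  -- `d = 0, β = 0`: the bound `r * p` on the number of terms is vacuous for `C ≤ r • Y`
  have hpos_sums := card_sigmaSeqAtMost_ge (Nat.zero_le r) 0 p (B := A.filter (0 < ·))
    (fun x hx => (mem_filter.1 hx).2) hpos
  have hneg_sums := card_sigmaSeqAtMost_ge hβr (m - p) (n - (m - p))
    (B := (A.filter (· < 0)).map (Equiv.neg ℤ).toEmbedding)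
    (fun _ => pos_of_mem_map_neg_filter_neg)
    (by rw [card_map, hneg]; omega)
  have hsplit := card_add_card_sigmaSeqAtMost_le h0 (r := r) (α := α) (c := r * p + 0)
    (c' := r * (n - (m - p)) + (m * r - α)) (hneg ▸ hαn)
    (by rw [hcard]; zify [hmu.le, hdn, hmp.le]; linarith)
  rw [Nat.sub_add_cancel hdn] at hneg_sums
  simp only [add_zero, mul_zero, zero_mul, Nat.zero_div] at hpos_sums hsplit
  rw [← Nat.cast_sub hmp.le, ← Nat.cast_mul, ← Nat.cast_sub hmu.le]
  zify at hpos_sums hneg_sums hsplit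
  linarith

theorem stmt_16 (n p r α m : ℕ) (hn : 1 ≤ n) (hp : 1 ≤ p) (hr : 1 ≤ r)
    (A : Finset ℤ) (hcard : A.card = n + p)
    (hneg : (A.filter (fun x => x < 0)).card = n)
    (hpos : (A.filter (fun x => 0 < x)).card = p)
    (h0 : (0 : ℤ) ∉ A)
    (hα : α ≤ r * (n + p) - 1) (hm1 : 1 ≤ m) (hmk : m ≤ n + p)
    (hml : (m - 1) * r ≤ α) (hmu : α < m * r)
    (hmn : m ≤ n) (hmp : p < m) :
    ((sigmaSeqAtLeast A r α).card : ℤ) ≥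
      (r : ℤ) * ((n : ℤ) * ((n : ℤ) + 1) / 2 + (p : ℤ) * ((p : ℤ) + 1) / 2
          - ((m : ℤ) - (p : ℤ)) * ((m : ℤ) - (p : ℤ) + 1) / 2)
        + ((m : ℤ) - (p : ℤ)) * ((m : ℤ) * (r : ℤ) - (α : ℤ)) + 1 :=
  stmt_16_general n p r α m A hcard hneg hpos h0 hml hmu hmn hmp
end

section
/- Let r ≥ 1 and let A be a set of k = n + p distinct integers consisting of exactly n ≥ 1 negative integers and exactly p ≥ 1 positive integers (0 ∉ A), and let 𝒜 be the multiset consisting of each element of A with multiplicity exactly r. Let α be an integer with 0 ≤ α ≤ rk − 1 and let m ∈ [1, k] be the integer with (m−1)r ≤ α < mr. If m > n and m > p, then |Σ_α(𝒜)| ≥ r(n(n+1)/2 + p(p+1)/2 − (m−n)(m−n+1)/2 − (m−p)(m−p+1)/2) + (2m−n−p)(mr − α) + 1. -/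
/-!
Let `γ = r|A| - α`. Taking complements in the multiset `𝒜`, the sums of at least `α` terms are
the total sum minus the sums of at most `γ` terms, so it suffices to count the latter. The
positive part of `A` and the negated negative part each give such sums, lying in `[0, ∞)` and
`(-∞, 0]` respectively. For a set `P` of `n` positive integers with maximum `a` and
`j₀ = min r γ`, the sums `j * a + y` with `j < j₀` and `y ∈ {0} ∪ (P \ {a})` are distinct and
below `j₀ * a`, while `j₀ * a` plus a sum of at most `γ - r` terms of `P \ {a}` is at least
`j₀ * a`; induction on `n` gives at least `1 + sumsCountLowerBound r n γ` sums. For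
`γ = (n + p - m) r + (m r - α)` this bound has the closed form of the theorem.
-/

open Finset

def sumsAtMost {M : Type*} [AddCommMonoid M] [DecidableEq M] (A : Finset M) (r γ : ℕ) :
    Finset M :=
  (((r • A.val).powerset.filter (fun B => Multiset.card B ≤ γ)).map Multiset.sum).toFinset

section sumsAtMost

variable {M : Type*} [AddCommMonoid M] [DecidableEq M] {A B : Finset M} {r γ δ : ℕ}

theorem mem_sumsAtMost {x : M} :
    x ∈ sumsAtMost A r γ ↔ ∃ C ≤ r • A.val, Multiset.card C ≤ γ ∧ C.sum = x := by
  simp [sumsAtMost, and_assoc]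

theorem zero_mem_sumsAtMost : (0 : M) ∈ sumsAtMost A r γ :=
  mem_sumsAtMost.2 ⟨0, Multiset.zero_le _, by simp, by simp⟩

theorem mem_sumsAtMost_of_mem {a : M} (ha : a ∈ A) (hr : r ≠ 0) (hγ : γ ≠ 0) :
    a ∈ sumsAtMost A r γ :=
  mem_sumsAtMost.2 ⟨{a}, Multiset.singleton_le.2 (Multiset.mem_nsmul.2 ⟨hr, ha⟩),
    by simpa [Nat.one_le_iff_ne_zero], by simp⟩

theorem nsmul_mem_sumsAtMost_singleton (a : M) {j : ℕ} (hjr : j ≤ r) (hjγ : j ≤ γ) :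
    j • a ∈ sumsAtMost {a} r γ :=
  mem_sumsAtMost.2 ⟨Multiset.replicate j a,
    by simpa [Multiset.nsmul_singleton] using Multiset.replicate_le_replicate a |>.2 hjr,
    by simpa using hjγ, by simp⟩

theorem sumsAtMost_mono (hAB : A ⊆ B) (hγδ : γ ≤ δ) : sumsAtMost A r γ ⊆ sumsAtMost B r δ := by
  intro x hx
  obtain ⟨C, hC, hCγ, rfl⟩ := mem_sumsAtMost.1 hx
  exact mem_sumsAtMost.2
    ⟨C, hC.trans (nsmul_le_nsmul_right (val_le_iff.2 hAB) r), hCγ.trans hγδ, rfl⟩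

theorem add_mem_sumsAtMost_union (hAB : Disjoint A B) {x y : M} (hx : x ∈ sumsAtMost A r γ)
    (hy : y ∈ sumsAtMost B r δ) : x + y ∈ sumsAtMost (A ∪ B) r (γ + δ) := by
  obtain ⟨C, hC, hCγ, rfl⟩ := mem_sumsAtMost.1 hx
  obtain ⟨D, hD, hDδ, rfl⟩ := mem_sumsAtMost.1 hy
  have hval : (A ∪ B).val = A.val + B.val := by rw [← disjUnion_eq_union A B hAB]; rfl
  refine mem_sumsAtMost.2 ⟨C + D, ?_, by simpa using add_le_add hCγ hDδ, Multiset.sum_add C D⟩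
  rw [hval, nsmul_add]
  exact add_le_add hC hD

theorem nsmul_add_mem_sumsAtMost_insert {a : M} (has : a ∉ A) {j : ℕ} (hjr : j ≤ r) {y : M}
    (hy : y ∈ sumsAtMost A r δ) (hjδ : j + δ ≤ γ) : j • a + y ∈ sumsAtMost (insert a A) r γ :=
  insert_eq a A ▸ sumsAtMost_mono subset_rfl hjδ (add_mem_sumsAtMost_union
    (disjoint_singleton_left.2 has) (nsmul_mem_sumsAtMost_singleton a hjr le_rfl) hy)

end sumsAtMost

theorem map_neg_sumsAtMost_map_neg_subset {G : Type*} [AddCommGroup G] [DecidableEq G]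
    (A : Finset G) (r γ : ℕ) :
    (sumsAtMost (A.map (Equiv.neg G).toEmbedding) r γ).map (Equiv.neg G).toEmbedding ⊆
      sumsAtMost A r γ := by
  intro x hx
  obtain ⟨y, hy, rfl⟩ := mem_map.1 hx
  obtain ⟨C, hC, hCγ, rfl⟩ := mem_sumsAtMost.1 hy
  refine mem_sumsAtMost.2 ⟨C.map Neg.neg, ?_, by simpa using hCγ, ?_⟩
  · simpa [Multiset.map_nsmul, Multiset.map_map] using Multiset.map_le_map (f := Neg.neg) hC
  · simpa using Multiset.sum_map_neg (m := C) (f := id)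

theorem nonneg_of_mem_sumsAtMost {A : Finset ℤ} {r γ : ℕ} (hA : ∀ a ∈ A, 0 ≤ a) {x : ℤ}
    (hx : x ∈ sumsAtMost A r γ) : 0 ≤ x := by
  obtain ⟨C, hC, -, rfl⟩ := mem_sumsAtMost.1 hx
  exact Multiset.sum_nonneg fun a ha => hA a (Multiset.mem_nsmul.1 (Multiset.mem_of_le hC ha)).2

theorem card_sumsAtMost_le_card_sigmaSeqAtLeast {A : Finset ℤ} {r α : ℕ} (hα : α ≤ r * #A) :
    #(sumsAtMost A r (r * #A - α)) ≤ #(sigmaSeqAtLeast A r α) := by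
  rw [← card_image_of_injective _ (sub_right_injective (b := (r • A.val).sum))]
  refine card_le_card fun x hx => ?_
  obtain ⟨y, hy, rfl⟩ := mem_image.1 hx
  obtain ⟨C, hC, hCγ, rfl⟩ := mem_sumsAtMost.1 hy
  obtain ⟨D, hD⟩ := Multiset.le_iff_exists_add.1 hC
  have hcard : Multiset.card (r • A.val) = r * #A := by simp
  simp only [sigmaSeqAtLeast, Multiset.mem_toFinset, Multiset.mem_map, Multiset.mem_filter,
    Multiset.mem_powerset]
  refine ⟨D, ⟨by rw [hD]; exact Multiset.le_add_left _ _, ?_⟩, ?_⟩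
  · have := congrArg Multiset.card hD
    rw [hcard, Multiset.card_add] at this
    omega
  · rw [hD, Multiset.sum_add]
    abel

def sumsCountLowerBound (r : ℕ) : ℕ → ℕ → ℕ
  | 0, _ => 0
  | n + 1, γ => min r γ * (n + 1) + sumsCountLowerBound r n (γ - r)

theorem two_mul_sumsCountLowerBound {r n q s : ℕ} (hq : q ≤ n) (hs : s ≤ r) :
    2 * (sumsCountLowerBound r n (q * r + s) : ℤ) =
      r * q * (2 * n - q + 1) + 2 * s * ((n : ℤ) - q) := by
  induction n generalizing q s with
  | zero =>
    obtain rfl : q = 0 := by omega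
    simp [sumsCountLowerBound]
  | succ n ih =>
    rcases q with _ | q
    · have h0 := ih (Nat.zero_le n) (Nat.zero_le r)
      simp only [zero_mul, zero_add, Nat.cast_zero, mul_zero, sub_zero] at h0 ⊢
      rw [sumsCountLowerBound, min_eq_right hs, Nat.sub_eq_zero_of_le hs, Nat.cast_add,
        Nat.cast_mul, mul_add, h0]
      push_cast
      ring
    · have hγ : (q + 1) * r + s - r = q * r + s := by rw [add_mul, one_mul]; omega
      have hmin : min r ((q + 1) * r + s) = r := min_eq_left (by nlinarith)
      rw [sumsCountLowerBound, hmin, hγ, Nat.cast_add, mul_add, ih (by omega) hs]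
      push_cast
      ring

theorem card_image_mul_add_of_lt {a : ℤ} (ha : 0 < a) {Y : Finset ℤ}
    (hY : ∀ y ∈ Y, 0 ≤ y ∧ y < a) (j : ℕ) :
    #((range j ×ˢ Y).image fun jy : ℕ × ℤ => (jy.1 : ℤ) * a + jy.2) = j * #Y := by
  rw [card_image_of_injOn, card_product, card_range]
  rintro ⟨j, y⟩ hjy ⟨j', y'⟩ hjy' h
  simp only [coe_product, Set.mem_prod, mem_coe] at hjy hjy' h
  obtain ⟨hq, hm⟩ := (Int.ediv_emod_unique (a := j * a + y) (q := j) ha).2 ⟨by ring, hY y hjy.2⟩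
  obtain ⟨hq', hm'⟩ :=
    (Int.ediv_emod_unique (a := j' * a + y') (q := j') ha).2 ⟨by ring, hY y' hjy'.2⟩
  rw [h] at hq hm
  simp only [Prod.mk.injEq]
  exact ⟨by exact_mod_cast hq.symm.trans hq', hm.symm.trans hm'⟩

theorem card_sumsAtMost_ge_of_pos {r : ℕ} (hr : r ≠ 0) {A : Finset ℤ} (hA : ∀ a ∈ A, 0 < a)
    (γ : ℕ) : sumsCountLowerBound r #A γ + 1 ≤ #(sumsAtMost A r γ) := by
  induction A using Finset.induction_on_max generalizing γ with
  | empty => simpa [sumsCountLowerBound] using ⟨0, zero_mem_sumsAtMost⟩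
  | insert a s hlt ih =>
    have has : a ∉ s := fun h => lt_irrefl a (hlt a h)
    have ha : 0 < a := hA a (mem_insert_self a s)
    have hs : ∀ x ∈ s, 0 < x := fun x hx => hA x (mem_insert_of_mem hx)
    have hdigit : ∀ y ∈ insert 0 s, 0 ≤ y ∧ y < a := by
      intro y hy
      rcases mem_insert.1 hy with rfl | hy
      exacts [⟨le_rfl, ha⟩, ⟨(hs y hy).le, hlt y hy⟩]
    set j₀ := min r γ
    set low := (range j₀ ×ˢ insert 0 s).image fun jy => (jy.1 : ℤ) * a + jy.2
    set high := (sumsAtMost s r (γ - r)).image fun z => (j₀ : ℤ) * a + z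
    have hlow_lt : ∀ x ∈ low, x < j₀ * a := by
      simp only [low, mem_image, mem_product, mem_range, Prod.exists]
      rintro x ⟨j, y, ⟨hj, hy⟩, rfl⟩
      have : ((j + 1 : ℕ) : ℤ) * a ≤ j₀ * a := by gcongr; omega
      push_cast at this
      linarith [(hdigit y hy).2]
    have hhigh_ge : ∀ x ∈ high, (j₀ : ℤ) * a ≤ x := by
      simp only [high, mem_image]
      rintro x ⟨z, hz, rfl⟩
      linarith [nonneg_of_mem_sumsAtMost (fun x hx => (hs x hx).le) hz]
    have hsub : low ∪ high ⊆ sumsAtMost (insert a s) r γ := by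
      refine union_subset (fun x hx => ?_) (fun x hx => ?_)
      · simp only [low, mem_image, mem_product, mem_range, Prod.exists] at hx
        obtain ⟨j, y, ⟨hj, hy⟩, rfl⟩ := hx
        have hy : y ∈ sumsAtMost s r 1 := by
          rcases mem_insert.1 hy with rfl | hy
          exacts [zero_mem_sumsAtMost, mem_sumsAtMost_of_mem hy hr one_ne_zero]
        simpa using nsmul_add_mem_sumsAtMost_insert has (j := j) (by omega) hy (by omega)
      · simp only [high, mem_image] at hx
        obtain ⟨z, hz, rfl⟩ := hx
        simpa using nsmul_add_mem_sumsAtMost_insert has (j := j₀) (min_le_left r γ) hz (by omega)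
    have hlow_card : #low = j₀ * (#s + 1) := by
      rw [card_image_mul_add_of_lt ha hdigit, card_insert_of_notMem fun h => lt_irrefl 0 (hs 0 h)]
    have hhigh_card : #high = #(sumsAtMost s r (γ - r)) :=
      card_image_of_injective _ (add_right_injective _)
    have hdisj' : Disjoint low high := disjoint_left.2 fun x hl hh =>
      lt_irrefl x ((hlow_lt x hl).trans_le (hhigh_ge x hh))
    calc sumsCountLowerBound r #(insert a s) γ + 1
        = j₀ * (#s + 1) + (sumsCountLowerBound r #s (γ - r) + 1) := by
          rw [card_insert_of_notMem has, sumsCountLowerBound]; ring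
      _ ≤ #low + #high := by rw [hlow_card, hhigh_card]; gcongr; exact ih hs _
      _ = #(low ∪ high) := (card_union_of_disjoint hdisj').symm
      _ ≤ _ := card_le_card hsub

theorem card_sumsAtMost_pos_add_card_sumsAtMost_neg_le (A : Finset ℤ) (r γ : ℕ) :
    #(sumsAtMost (A.filter (0 < ·)) r γ) +
        #(sumsAtMost ((A.filter (· < 0)).map (Equiv.neg ℤ).toEmbedding) r γ) ≤
      #(sumsAtMost A r γ) + 1 := by
  set S := sumsAtMost (A.filter (0 < ·)) r γ
  set T := (sumsAtMost ((A.filter (· < 0)).map (Equiv.neg ℤ).toEmbedding) r γ).map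
    (Equiv.neg ℤ).toEmbedding
  have hST : S ∪ T ⊆ sumsAtMost A r γ := union_subset
    (sumsAtMost_mono (filter_subset _ A) le_rfl)
    ((map_neg_sumsAtMost_map_neg_subset _ r γ).trans (sumsAtMost_mono (filter_subset _ A) le_rfl))
  have hS : ∀ x ∈ S, 0 ≤ x :=
    fun x => nonneg_of_mem_sumsAtMost fun a ha => (mem_filter.1 ha).2.le
  have hT : ∀ x ∈ T, x ≤ 0 := by
    simp only [T, mem_map, Equiv.coe_toEmbedding, Equiv.neg_apply]
    rintro _ ⟨y, hy, rfl⟩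
    refine neg_nonpos.2 (nonneg_of_mem_sumsAtMost (fun a ha => ?_) hy)
    obtain ⟨b, hb, rfl⟩ := mem_map.1 ha
    simpa using (mem_filter.1 hb).2.le
  have hinter : #(S ∩ T) ≤ 1 := card_le_one.2 fun x hx y hy => by
    have := hS x (mem_inter.1 hx).1; have := hT x (mem_inter.1 hx).2
    have := hS y (mem_inter.1 hy).1; have := hT y (mem_inter.1 hy).2
    omega
  have := card_union_add_card_inter S T
  have := card_le_card hST
  have hTcard : #T = _ := card_map _
  omega

theorem stmt_17_general (n p r α m : ℕ) (hr : 1 ≤ r)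
    (A : Finset ℤ) (hcard : A.card = n + p)
    (hneg : (A.filter (fun x => x < 0)).card = n)
    (hpos : (A.filter (fun x => 0 < x)).card = p)
    (hm1 : 1 ≤ m) (hmk : m ≤ n + p)
    (hml : (m - 1) * r ≤ α) (hmu : α < m * r)
    (hmn : n < m) (hmp : p < m) :
    ((sigmaSeqAtLeast A r α).card : ℤ) ≥
      (r : ℤ) * ((n : ℤ) * ((n : ℤ) + 1) / 2 + (p : ℤ) * ((p : ℤ) + 1) / 2
          - ((m : ℤ) - (n : ℤ)) * ((m : ℤ) - (n : ℤ) + 1) / 2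
          - ((m : ℤ) - (p : ℤ)) * ((m : ℤ) - (p : ℤ) + 1) / 2)
        + (2 * (m : ℤ) - (n : ℤ) - (p : ℤ)) * ((m : ℤ) * (r : ℤ) - (α : ℤ))
        + 1 := by
  have hr0 : r ≠ 0 := by omega
  have hrA : r * #A = (n + p) * r := by rw [hcard, mul_comm]
  have hmr : m * r ≤ (n + p) * r := Nat.mul_le_mul_right r hmk
  have hsplit : (n + p - m) * r + m * r = (n + p) * r := by rw [← add_mul, Nat.sub_add_cancel hmk]
  have hsr : m * r - α ≤ r := by
    have : (m - 1) * r + r = m * r := by rw [← add_one_mul, Nat.sub_add_cancel hm1]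
    omega
  set γ := r * #A - α
  have hγ : γ = (n + p - m) * r + (m * r - α) := by omega
  have hcount := (card_sumsAtMost_pos_add_card_sumsAtMost_neg_le A r γ).trans
    (Nat.add_le_add_right (card_sumsAtMost_le_card_sigmaSeqAtLeast (by omega)) 1)
  have hP : sumsCountLowerBound r p γ + 1 ≤ #(sumsAtMost (A.filter (0 < ·)) r γ) := by
    simpa [hpos] using card_sumsAtMost_ge_of_pos hr0 (A := A.filter (0 < ·))
      (fun a ha => (mem_filter.1 ha).2) γ
  have hN : sumsCountLowerBound r n γ + 1 ≤
      #(sumsAtMost ((A.filter (· < 0)).map (Equiv.neg ℤ).toEmbedding) r γ) := by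
    simpa [hneg] using card_sumsAtMost_ge_of_pos hr0
      (A := (A.filter (· < 0)).map (Equiv.neg ℤ).toEmbedding) (by simp) γ
  have hFP := two_mul_sumsCountLowerBound (n := p) (by omega : n + p - m ≤ p) hsr
  have hFN := two_mul_sumsCountLowerBound (n := n) (by omega : n + p - m ≤ n) hsr
  rw [← hγ] at hFP hFN
  push_cast [Nat.cast_sub hmk, Nat.cast_sub hmu.le] at hFP hFN
  have hhalf (x : ℤ) : 2 * (r * (x * (x + 1) / 2)) = r * (x * (x + 1)) := by
    rw [mul_left_comm, Int.mul_ediv_cancel' (even_iff_two_dvd.mp (Int.even_mul_succ_self x))]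
  have hsum : (sumsCountLowerBound r p γ : ℤ) + sumsCountLowerBound r n γ + 1 ≤
      #(sigmaSeqAtLeast A r α) := by
    exact_mod_cast (by omega)
  linarith [hhalf n, hhalf p, hhalf (m - n), hhalf (m - p)]

theorem stmt_17 (n p r α m : ℕ) (hn : 1 ≤ n) (hp : 1 ≤ p) (hr : 1 ≤ r)
    (A : Finset ℤ) (hcard : A.card = n + p)
    (hneg : (A.filter (fun x => x < 0)).card = n)
    (hpos : (A.filter (fun x => 0 < x)).card = p)
    (h0 : (0 : ℤ) ∉ A)
    (hα : α ≤ r * (n + p) - 1) (hm1 : 1 ≤ m) (hmk : m ≤ n + p)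
    (hml : (m - 1) * r ≤ α) (hmu : α < m * r)
    (hmn : n < m) (hmp : p < m) :
    ((sigmaSeqAtLeast A r α).card : ℤ) ≥
      (r : ℤ) * ((n : ℤ) * ((n : ℤ) + 1) / 2 + (p : ℤ) * ((p : ℤ) + 1) / 2
          - ((m : ℤ) - (n : ℤ)) * ((m : ℤ) - (n : ℤ) + 1) / 2
          - ((m : ℤ) - (p : ℤ)) * ((m : ℤ) - (p : ℤ) + 1) / 2)
        + (2 * (m : ℤ) - (n : ℤ) - (p : ℤ)) * ((m : ℤ) * (r : ℤ) - (α : ℤ))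
        + 1 :=
  stmt_17_general n p r α m hr A hcard hneg hpos hm1 hmk hml hmu hmn hmp
end

section
/- Let k ≥ 3, r ≥ 1, and α be integers with 0 ≤ α ≤ rk − 1, and let m ∈ [1, k] be the integer with (m−1)r ≤ α < mr. Let A be a set of k distinct integers with 0 ∈ A, and let 𝒜 be the multiset consisting of each element of A with multiplicity exactly r. Then |Σ_α(𝒜)| ≥ r(⌊k²/4⌋ − m(m−1)/2) + 1; equivalently, |Σ_α(𝒜)| ≥ r((k²−1)/4 − m(m−1)/2) + 1 if k is odd and |Σ_α(𝒜)| ≥ r(k²/4 − m(m−1)/2) + 1 if k is even. -/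
theorem Nat.succ_choose_two (n : ℕ) : (n + 1).choose 2 = n + n.choose 2 := by
  rw [Nat.choose_succ_succ', Nat.choose_one_right]

theorem Nat.two_mul_succ_choose_two (n : ℕ) : 2 * (n + 1).choose 2 = (n + 1) * n := by
  induction n with
  | zero => rfl
  | succ n ih => rw [Nat.succ_choose_two, mul_add, ih]; ring

theorem Nat.succ_choose_two_add_succ_choose_two_le (a b : ℕ) :
    (a + 1).choose 2 + (b + 1).choose 2 ≤ (a + b + 1).choose 2 := by
  induction b with
  | zero => simp
  | succ b ih =>
    rw [Nat.succ_choose_two (b + 1), show a + (b + 1) + 1 = a + b + 1 + 1 by ring,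
      Nat.succ_choose_two (a + b + 1)]
    omega

theorem Nat.sq_div_four_le_succ_choose_two_add (s t : ℕ) :
    (s + t + 1) ^ 2 / 4 ≤ (s + 1).choose 2 + (t + 1).choose 2 := by
  rw [Nat.div_le_iff_le_mul_add_pred (by norm_num)]
  have hs := Nat.two_mul_succ_choose_two s
  have ht := Nat.two_mul_succ_choose_two t
  zify at hs ht ⊢
  nlinarith [sq_nonneg ((s : ℤ) - t)]

theorem Nat.sq_div_four_add_choose_two_le {s t n m : ℕ} (hm : 1 ≤ m) (h : s + t + 1 = n + m) :
    (s + t + 1) ^ 2 / 4 + (s - n + 1).choose 2 + (t - n + 1).choose 2 ≤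
      (s + 1).choose 2 + (t + 1).choose 2 + m.choose 2 := by
  have htail : (s - n + 1).choose 2 + (t - n + 1).choose 2 ≤ m.choose 2 :=
    (Nat.succ_choose_two_add_succ_choose_two_le _ _).trans
      (Nat.choose_le_choose 2 (by omega))
  have := Nat.sq_div_four_le_succ_choose_two_add s t
  omega

def subsumsAtMost (A : Finset ℤ) (r β : ℕ) : Finset ℤ :=
  (((r • A.val).powerset.filter (fun B => Multiset.card B ≤ β)).map
    Multiset.sum).toFinset

section
variable {A U V : Finset ℤ} {r α β : ℕ} {x : ℤ}

theorem mem_sigmaSeqAtLeast :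
    x ∈ sigmaSeqAtLeast A r α ↔ ∃ B ≤ r • A.val, α ≤ Multiset.card B ∧ B.sum = x := by
  simp [sigmaSeqAtLeast, and_assoc]

theorem mem_subsumsAtMost :
    x ∈ subsumsAtMost A r β ↔ ∃ B ≤ r • A.val, Multiset.card B ≤ β ∧ B.sum = x := by
  simp [subsumsAtMost, and_assoc]

theorem card_subsumsAtMost_le_card_sigmaSeqAtLeast (hα : α ≤ r * A.card) :
    (subsumsAtMost A r (r * A.card - α)).card ≤ (sigmaSeqAtLeast A r α).card := by
  set M := r • A.val
  have hM : Multiset.card M = r * A.card := by simp [M]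
  refine Finset.card_le_card_of_injOn (M.sum - ·) (fun x hx => ?_) (sub_right_injective.injOn)
  obtain ⟨B, hB, hcard, rfl⟩ := mem_subsumsAtMost.mp hx
  refine mem_sigmaSeqAtLeast.mpr ⟨M - B, tsub_le_self, ?_, ?_⟩
  · rw [Multiset.card_sub hB, hM]
    have := Multiset.card_le_card hB
    omega
  · rw [eq_sub_iff_add_eq, ← Multiset.sum_add, tsub_add_cancel_of_le hB]

theorem zero_mem_subsumsAtMost : 0 ∈ subsumsAtMost A r β :=
  mem_subsumsAtMost.mpr ⟨0, Multiset.zero_le _, by simp, by simp⟩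

theorem subsumsAtMost_mono (hUV : U ⊆ V) (hβ : α ≤ β) :
    subsumsAtMost U r α ⊆ subsumsAtMost V r β := by
  intro x hx
  obtain ⟨B, hB, hcard, rfl⟩ := mem_subsumsAtMost.mp hx
  exact mem_subsumsAtMost.mpr
    ⟨B, hB.trans (nsmul_le_nsmul_right (Finset.val_le_iff.mpr hUV) r), hcard.trans hβ, rfl⟩

theorem natCast_mul_mem_subsumsAtMost {c : ℤ} {p : ℕ} (hc : c ∈ A) (hp : p ≤ r) :
    (p : ℤ) * c ∈ subsumsAtMost A r p := by
  refine mem_subsumsAtMost.mpr ⟨Multiset.replicate p c, ?_, by simp, by simp⟩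
  calc Multiset.replicate p c ≤ Multiset.replicate r c :=
        (Multiset.replicate_le_replicate c).mpr hp
    _ = r • {c} := (Multiset.nsmul_singleton c r).symm
    _ ≤ r • A.val := nsmul_le_nsmul_right (Multiset.singleton_le.mpr hc) r

theorem add_mem_subsumsAtMost_union {y : ℤ} (hUV : Disjoint U V)
    (hx : x ∈ subsumsAtMost U r α) (hy : y ∈ subsumsAtMost V r β) :
    x + y ∈ subsumsAtMost (U ∪ V) r (α + β) := by
  obtain ⟨B, hB, hBcard, rfl⟩ := mem_subsumsAtMost.mp hx
  obtain ⟨C, hC, hCcard, rfl⟩ := mem_subsumsAtMost.mp hy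
  refine mem_subsumsAtMost.mpr ⟨B + C, ?_, by rw [Multiset.card_add]; omega,
    Multiset.sum_add B C⟩
  rw [← Finset.disjUnion_eq_union U V hUV, Finset.disjUnion_val, nsmul_add]
  exact add_le_add hB hC

theorem neg_mem_subsumsAtMost_of_mem_map_neg
    (hx : x ∈ subsumsAtMost (U.map (Equiv.neg ℤ).toEmbedding) r β) :
    -x ∈ subsumsAtMost U r β := by
  obtain ⟨B, hB, hcard, rfl⟩ := mem_subsumsAtMost.mp hx
  refine mem_subsumsAtMost.mpr ⟨B.map Neg.neg, ?_, by simpa using hcard, Multiset.sum_map_neg' B⟩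
  have := Multiset.map_le_map (f := Neg.neg) hB
  simpa [Finset.map_val, Multiset.map_nsmul, Multiset.map_map] using this

end

section
variable {V : Finset ℤ} {r β : ℕ}

theorem injOn_natCast_mul_add {c : ℤ} :
    Set.InjOn (fun q : ℕ × ℤ => q.1 * c + q.2) {q | 0 ≤ q.2 ∧ q.2 < c} := by
  rintro ⟨p, v⟩ ⟨hv0, hvc⟩ ⟨p', v'⟩ ⟨hv0', hvc'⟩ h
  have hv : v = v' := by
    simpa [Int.emod_eq_of_lt, hv0, hvc, hv0', hvc'] using congrArg (· % c) h
  subst hv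
  have hc : c ≠ 0 := by omega
  simp_all

-- The sums `p * c + v` (`p < r`, `v = 0` or `v ∈ V \ {c}`) have distinct base-`c` digits.
theorem mul_card_le_card_filter_lt (hpos : ∀ x ∈ V, 0 < x) (hne : V.Nonempty) (hβ : r ≤ β) :
    r * V.card ≤
      ((subsumsAtMost V r β).filter (fun x => 0 ≤ x ∧ x < r * V.max' hne)).card := by
  set c := V.max' hne
  have hc : c ∈ V := V.max'_mem hne
  have hcpos : 0 < c := hpos c hc
  have hzero : (0 : ℤ) ∉ V.erase c := fun h => (hpos 0 (Finset.mem_of_mem_erase h)).false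
  have hdigit : ∀ v ∈ insert 0 (V.erase c), 0 ≤ v ∧ v < c := by
    intro v hv
    rcases Finset.mem_insert.mp hv with rfl | hv
    · exact ⟨le_rfl, hcpos⟩
    · exact ⟨(hpos v (Finset.mem_of_mem_erase hv)).le,
        lt_of_le_of_ne (V.le_max' v (Finset.mem_of_mem_erase hv)) (Finset.ne_of_mem_erase hv)⟩
  have hdom : ((Finset.range r ×ˢ insert 0 (V.erase c)).card) = r * V.card := by
    rw [Finset.card_product, Finset.card_range, Finset.card_insert_of_notMem hzero,
      Finset.card_erase_add_one hc]
  rw [← hdom]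
  refine Finset.card_le_card_of_injOn (fun q : ℕ × ℤ => q.1 * c + q.2) ?_
    (injOn_natCast_mul_add.mono fun q hq => hdigit q.2 (Finset.mem_product.mp hq).2)
  rintro ⟨p, v⟩ hq
  obtain ⟨hp, hv⟩ := Finset.mem_product.mp hq
  rw [Finset.mem_range] at hp
  obtain ⟨hv0, hvc⟩ := hdigit v hv
  have hv_mem : v ∈ subsumsAtMost (V.erase c) r 1 := by
    rcases Finset.mem_insert.mp hv with rfl | hv
    · exact zero_mem_subsumsAtMost
    · simpa using natCast_mul_mem_subsumsAtMost (p := 1) hv (by omega)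
  have hmem := add_mem_subsumsAtMost_union (Finset.disjoint_singleton_left.mpr
    (Finset.notMem_erase c V)) (natCast_mul_mem_subsumsAtMost (Finset.mem_singleton_self c)
      hp.le) hv_mem
  rw [← Finset.insert_eq, Finset.insert_erase hc] at hmem
  have hpc : ((p : ℤ) + 1) * c ≤ r * c :=
    mul_le_mul_of_nonneg_right (by exact_mod_cast hp) hcpos.le
  exact Finset.mem_filter.mpr ⟨subsumsAtMost_mono subset_rfl (by omega) hmem,
    by positivity, by simp only; linarith⟩

theorem card_filter_nonneg_le_card_filter_ge {c : ℤ} (hc : c ∈ V) (hβ : r ≤ β) :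
    ((subsumsAtMost (V.erase c) r (β - r)).filter (0 ≤ ·)).card ≤
      ((subsumsAtMost V r β).filter (r * c ≤ ·)).card := by
  refine Finset.card_le_card_of_injOn (r * c + ·) (fun x hx => ?_) (add_right_injective _).injOn
  obtain ⟨hx, hx0⟩ := Finset.mem_filter.mp hx
  have hmem := add_mem_subsumsAtMost_union (Finset.disjoint_singleton_left.mpr
    (Finset.notMem_erase c V)) (natCast_mul_mem_subsumsAtMost (Finset.mem_singleton_self c)
      le_rfl) hx
  rw [← Finset.insert_eq, Finset.insert_erase hc, Nat.add_sub_cancel' hβ] at hmem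
  exact Finset.mem_filter.mpr ⟨hmem, by simp only; linarith⟩

theorem mul_card_add_card_filter_nonneg_erase_le (hpos : ∀ x ∈ V, 0 < x) (hne : V.Nonempty)
    (hβ : r ≤ β) :
    r * V.card + ((subsumsAtMost (V.erase (V.max' hne)) r (β - r)).filter (0 ≤ ·)).card ≤
      ((subsumsAtMost V r β).filter (0 ≤ ·)).card := by
  set W := subsumsAtMost V r β
  set c := V.max' hne
  have hrc : 0 ≤ (r : ℤ) * c := by have := hpos c (V.max'_mem hne); positivity
  have hdisj : Disjoint (W.filter (fun x => 0 ≤ x ∧ x < r * c)) (W.filter (r * c ≤ ·)) :=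
    Finset.disjoint_filter.mpr fun x _ h h' => absurd h' (not_le.mpr h.2)
  have hsub : W.filter (fun x => 0 ≤ x ∧ x < r * c) ∪ W.filter (r * c ≤ ·) ⊆ W.filter (0 ≤ ·) := by
    intro x hx
    simp only [Finset.mem_union, Finset.mem_filter] at hx ⊢
    rcases hx with ⟨hx, h, -⟩ | ⟨hx, h⟩
    · exact ⟨hx, h⟩
    · exact ⟨hx, hrc.trans h⟩
  calc _ ≤ (W.filter (fun x => 0 ≤ x ∧ x < r * c)).card + (W.filter (r * c ≤ ·)).card :=
        add_le_add (mul_card_le_card_filter_lt hpos hne hβ)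
          (card_filter_nonneg_le_card_filter_ge (V.max'_mem hne) hβ)
    _ = (W.filter (fun x => 0 ≤ x ∧ x < r * c) ∪ W.filter (r * c ≤ ·)).card :=
        (Finset.card_union_of_disjoint hdisj).symm
    _ ≤ _ := Finset.card_le_card hsub
end

-- `V.card - n` truncates at 0: once `n ≥ V.card` every element has been peeled off.
theorem mul_choose_two_add_one_le_card_filter_nonneg_add {V : Finset ℤ} {r β : ℕ}
    (hpos : ∀ x ∈ V, 0 < x) (n : ℕ) (hβ : r * n ≤ β) :
    r * (V.card + 1).choose 2 + 1 ≤
      ((subsumsAtMost V r β).filter (0 ≤ ·)).card + r * (V.card - n + 1).choose 2 := by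
  have hzero : ∀ {U : Finset ℤ} {γ : ℕ}, 1 ≤ ((subsumsAtMost U r γ).filter (0 ≤ ·)).card :=
    Finset.card_pos.mpr ⟨0, Finset.mem_filter.mpr ⟨zero_mem_subsumsAtMost, le_rfl⟩⟩
  induction n generalizing V β with
  | zero => simpa using hzero
  | succ n ih =>
    rcases V.eq_empty_or_nonempty with rfl | hne
    · simpa using hzero
    have hrβ : r ≤ β := le_trans (Nat.le_mul_of_pos_right r n.succ_pos) hβ
    have hlevels := ih (V := V.erase (V.max' hne)) (β := β - r)
      (fun x hx => hpos x (Finset.mem_of_mem_erase hx)) (by rw [Nat.mul_succ] at hβ; omega)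
    have hstep := mul_card_add_card_filter_nonneg_erase_le hpos hne hrβ
    rw [← Finset.card_erase_add_one (V.max'_mem hne)] at hstep ⊢
    rw [Nat.succ_choose_two, Nat.add_sub_add_right, mul_add]
    omega

theorem Finset.card_filter_nonneg_add_card_filter_nonpos_le (W : Finset ℤ) :
    (W.filter (0 ≤ ·)).card + (W.filter (· ≤ 0)).card ≤ W.card + 1 := by
  rw [← Finset.card_union_add_card_inter]
  refine add_le_add (Finset.card_le_card (Finset.union_subset (Finset.filter_subset _ _)
    (Finset.filter_subset _ _))) (Finset.card_le_one.mpr fun a ha b hb => ?_)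
  simp only [Finset.mem_inter, Finset.mem_filter] at ha hb
  omega

theorem Finset.card_filter_neg_add_card_filter_pos {A : Finset ℤ} (h0 : 0 ∈ A) :
    (A.filter (· < 0)).card + (A.filter (0 < ·)).card + 1 = A.card := by
  have hsplit : A.filter (fun x => ¬ x < 0) = insert 0 (A.filter (0 < ·)) := by
    ext x
    by_cases hx : x = 0
    · simp [hx, h0]
    · simp only [Finset.mem_filter, Finset.mem_insert, hx, false_or, not_lt]
      exact and_congr_right fun _ => by omega
  rw [← A.card_filter_add_card_filter_not (· < 0), hsplit,
    Finset.card_insert_of_notMem (by simp), add_assoc]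

theorem card_filter_nonneg_map_neg_le {U : Finset ℤ} {r β : ℕ} :
    ((subsumsAtMost (U.map (Equiv.neg ℤ).toEmbedding) r β).filter (0 ≤ ·)).card ≤
      ((subsumsAtMost U r β).filter (· ≤ 0)).card := by
  refine Finset.card_le_card_of_injOn Neg.neg (fun x hx => ?_) neg_injective.injOn
  obtain ⟨hx, hx0⟩ := Finset.mem_filter.mp hx
  exact Finset.mem_filter.mpr ⟨neg_mem_subsumsAtMost_of_mem_map_neg hx, neg_nonpos.mpr hx0⟩

theorem mul_choose_two_add_le_card_subsumsAtMost {A : Finset ℤ} {r β : ℕ} (n : ℕ)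
    (hβ : r * n ≤ β) :
    r * ((A.filter (· < 0)).card + 1).choose 2 + r * ((A.filter (0 < ·)).card + 1).choose 2 + 1
      ≤ (subsumsAtMost A r β).card + r * ((A.filter (· < 0)).card - n + 1).choose 2 +
        r * ((A.filter (0 < ·)).card - n + 1).choose 2 := by
  have hpos := mul_choose_two_add_one_le_card_filter_nonneg_add (V := A.filter (0 < ·))
    (fun x hx => (Finset.mem_filter.mp hx).2) n hβ
  have hneg := mul_choose_two_add_one_le_card_filter_nonneg_add
    (V := (A.filter (· < 0)).map (Equiv.neg ℤ).toEmbedding)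
    (fun x hx => by
      obtain ⟨y, hy, rfl⟩ := Finset.mem_map.mp hx
      simpa using (Finset.mem_filter.mp hy).2) n hβ
  rw [Finset.card_map] at hneg
  have hWpos : ((subsumsAtMost (A.filter (0 < ·)) r β).filter (0 ≤ ·)).card ≤
      ((subsumsAtMost A r β).filter (0 ≤ ·)).card :=
    Finset.card_le_card (Finset.filter_subset_filter _
      (subsumsAtMost_mono (Finset.filter_subset _ _) le_rfl))
  have hWneg : ((subsumsAtMost (A.filter (· < 0)) r β).filter (· ≤ 0)).card ≤
      ((subsumsAtMost A r β).filter (· ≤ 0)).card :=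
    Finset.card_le_card (Finset.filter_subset_filter _
      (subsumsAtMost_mono (Finset.filter_subset _ _) le_rfl))
  have hnegpos := card_filter_nonneg_map_neg_le (U := A.filter (· < 0)) (r := r) (β := β)
  have hW := (subsumsAtMost A r β).card_filter_nonneg_add_card_filter_nonpos_le
  omega

theorem stmt_19_general (k r α m : ℕ)
    (hm1 : 1 ≤ m) (hmk : m ≤ k)
    (hmu : α < m * r)
    (A : Finset ℤ) (hcard : A.card = k) (h0 : (0 : ℤ) ∈ A) :
    ((sigmaSeqAtLeast A r α).card : ℤ) ≥
      (r : ℤ) * ((k : ℤ) ^ 2 / 4 - (m : ℤ) * ((m : ℤ) - 1) / 2) + 1 := by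
  have hrk : r * (k - m) + m * r = r * k := by
    rw [mul_comm m r, ← mul_add, Nat.sub_add_cancel hmk]
  have hW := mul_choose_two_add_le_card_subsumsAtMost (A := A) (r := r) (k - m) (β := r * k - α)
    (by omega)
  have hWσ := card_subsumsAtMost_le_card_sigmaSeqAtLeast (A := A) (r := r) (α := α)
    (by rw [hcard]; omega)
  have hsplit := Finset.card_filter_neg_add_card_filter_pos h0
  rw [hcard] at hWσ hsplit
  have harith := Nat.mul_le_mul_left r (Nat.sq_div_four_add_choose_two_le hm1
    (hsplit.trans (Nat.sub_add_cancel hmk).symm))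
  rw [hsplit] at harith
  simp only [mul_add] at harith
  have key : r * (k ^ 2 / 4) + 1 ≤ (sigmaSeqAtLeast A r α).card + r * m.choose 2 := by omega
  have hm2 : (m : ℤ) * ((m : ℤ) - 1) / 2 = (m.choose 2 : ℕ) := by
    rw [Nat.choose_two_right]
    push_cast [Nat.cast_sub hm1]
    rfl
  have hk4 : (k : ℤ) ^ 2 / 4 = (k ^ 2 / 4 : ℕ) := by push_cast; rfl
  rw [hm2, hk4, ge_iff_le, mul_sub]
  have := (Nat.cast_le (α := ℤ)).mpr key
  simp only [Nat.cast_add, Nat.cast_mul, Nat.cast_one] at this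
  linarith

theorem stmt_19 (k r α m : ℕ) (hk : 3 ≤ k) (hr : 1 ≤ r)
    (hα : α ≤ r * k - 1) (hm1 : 1 ≤ m) (hmk : m ≤ k)
    (hml : (m - 1) * r ≤ α) (hmu : α < m * r)
    (A : Finset ℤ) (hcard : A.card = k) (h0 : (0 : ℤ) ∈ A) :
    ((sigmaSeqAtLeast A r α).card : ℤ) ≥
      (r : ℤ) * ((k : ℤ) ^ 2 / 4 - (m : ℤ) * ((m : ℤ) - 1) / 2) + 1 :=
  stmt_19_general k r α m hm1 hmk hmu A hcard h0
end
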